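/- arXiv:0805.1008 — 6 statements merged into one kernel-verified Lean document; each statement's English description precedes it below -/
import Mathlib

section
/- Let N ≅ ℤⁿ be a lattice and let ρ₀, ρ₁, …, ρₙ ∈ N span N_ℝ as a cone (i.e. every element of N_ℝ is a nonnegative real combination of them). Then there exist positive integers λ₀, λ₁, …, λₙ with gcd(λ₀,…,λₙ) = 1, unique up to reordering matching the ρᵢ, such that λ₀ρ₀ + λ₁ρ₁ + … + λₙρₙ = 0. -/
/-!
Because ρ₀, …, ρₙ positively span N_ℝ, the map a ↦ ∑ aᵢ ρᵢ from ℝⁿ⁺¹ onto N_ℝ has a line as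
kernel, and writing -∑ ρᵢ = ∑ aᵢ ρᵢ with aᵢ ≥ 0 puts the strictly positive vector (aᵢ + 1) on it.
Being n + 1 vectors in ℤⁿ, the ρᵢ also satisfy a nonzero integer relation; it lies on the same
line, so up to sign it is positive, and dividing it by the gcd of its entries gives the weights.
Two positive integer vectors with coprime entries on a common line are equal.
-/

open Module

theorem exists_eq_smul_of_sum_smul_eq_zero {K M ι : Type*} [Field K] [AddCommGroup M]
    [Module K M] [FiniteDimensional K M] [Fintype ι] {v : ι → M}
    (hcard : Fintype.card ι = finrank K M + 1)
    (hv : Function.Surjective (Fintype.linearCombination K v)) {a b : ι → K} (ha : a ≠ 0)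
    (ha0 : ∑ i, a i • v i = 0) (hb0 : ∑ i, b i • v i = 0) : ∃ c : K, b = c • a := by
  set f := Fintype.linearCombination K v
  have hker : finrank K (LinearMap.ker f) = 1 := by
    have := f.finrank_range_add_finrank_ker
    rw [LinearMap.range_eq_top.mpr hv, finrank_top, finrank_fintype_fun_eq_card] at this
    omega
  have hmem : ∀ {x : ι → K}, ∑ i, x i • v i = 0 → x ∈ LinearMap.ker f := fun h => by
    rwa [LinearMap.mem_ker, Fintype.linearCombination_apply]
  obtain ⟨c, hc⟩ := (finrank_eq_one_iff_of_nonzero' (⟨a, hmem ha0⟩ : LinearMap.ker f)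
    (by simpa using ha)).mp hker ⟨b, hmem hb0⟩
  exact ⟨c, by simpa using (congrArg Subtype.val hc).symm⟩

theorem exists_pos_sum_smul_eq_zero {R M ι : Type*} [Ring R] [PartialOrder R]
    [IsStrictOrderedRing R] [AddCommGroup M] [Module R M] [Fintype ι] {v : ι → M}
    (hv : ∀ x : M, ∃ a : ι → R, (∀ i, 0 ≤ a i) ∧ x = ∑ i, a i • v i) :
    ∃ b : ι → R, (∀ i, 0 < b i) ∧ ∑ i, b i • v i = 0 := by
  obtain ⟨a, ha, hsum⟩ := hv (-∑ i, v i)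
  refine ⟨a + 1, fun i => add_pos_of_nonneg_of_pos (ha i) one_pos, ?_⟩
  simp [add_smul, Finset.sum_add_distrib, ← hsum]

theorem exists_mul_pos_of_cast_eq_smul {ι : Type*} {w : ι → ℤ} {b : ι → ℝ} {c : ℝ}
    (hb : ∀ i, 0 < b i) (hw : w ≠ 0) (hwc : (fun i => (w i : ℝ)) = c • b) :
    ∃ s : ℤ, ∀ i, 0 < s * w i := by
  have hwi : ∀ i, (w i : ℝ) = c * b i := fun i => congrFun hwc i
  rcases lt_trichotomy c 0 with hc | rfl | hc
  · refine ⟨-1, fun i => ?_⟩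
    have : (w i : ℝ) < 0 := hwi i ▸ mul_neg_of_neg_of_pos hc (hb i)
    have : w i < 0 := by exact_mod_cast this
    omega
  · exact absurd (funext fun i => by exact_mod_cast (hwi i).trans (zero_mul _)) hw
  · refine ⟨1, fun i => ?_⟩
    have : (0 : ℝ) < w i := hwi i ▸ mul_pos hc (hb i)
    simpa using (by exact_mod_cast this : 0 < w i)

theorem exists_gcd_eq_one_pos_sum_smul_eq_zero {ι M : Type*} [Fintype ι] [Nonempty ι]
    [AddCommGroup M] [IsAddTorsionFree M] {v : ι → M} {u : ι → ℤ} (hu : ∀ i, 0 < u i)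
    (huv : ∑ i, u i • v i = 0) :
    ∃ l : ι → ℤ, (∀ i, 0 < l i) ∧ Finset.univ.gcd l = 1 ∧ ∑ i, l i • v i = 0 := by
  obtain ⟨l, hul, hl⟩ := Finset.univ.extract_gcd u Finset.univ_nonempty
  set g := Finset.univ.gcd u
  have hg : 0 < g := by
    refine lt_of_le_of_ne (Int.nonneg_of_normalize_eq_self Finset.normalize_gcd) fun h => ?_
    obtain ⟨i⟩ := ‹Nonempty ι›
    exact (hu i).ne' (Finset.gcd_eq_zero_iff.mp h.symm i (Finset.mem_univ i))
  refine ⟨l, fun i => pos_of_mul_pos_right (hul i (Finset.mem_univ i) ▸ hu i) hg.le, hl, ?_⟩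
  refine zsmul_right_injective hg.ne' ?_
  simp only [Finset.smul_sum, smul_smul, ← hul _ (Finset.mem_univ _), huv, smul_zero]

theorem smul_eq_smul_of_cast_eq_smul {ι : Type*} {y z : ι → ℤ} {b : ι → ℝ} {c d : ℝ}
    (hy : (fun i => (y i : ℝ)) = c • b) (hz : (fun i => (z i : ℝ)) = d • b) (i : ι) :
    y i • z = z i • y := by
  ext j
  have hy' : ∀ k, (y k : ℝ) = c * b k := fun k => congrFun hy k
  have hz' : ∀ k, (z k : ℝ) = d * b k := fun k => congrFun hz k
  have : ((y i * z j : ℤ) : ℝ) = ((z i * y j : ℤ) : ℝ) := by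
    push_cast
    rw [hy', hy', hz', hz']
    ring
  exact_mod_cast this

theorem eq_of_smul_eq_smul_of_gcd_eq_one {ι : Type*} {s : Finset ι} {y z : ι → ℤ} {p q : ℤ}
    (hp : 0 < p) (hq : 0 < q) (hy : s.gcd y = 1) (hz : s.gcd z = 1) (h : p • z = q • y) :
    z = y := by
  have hgcd : ∀ {r : ℤ} {x : ι → ℤ}, 0 < r → s.gcd x = 1 → s.gcd (r • x) = r :=
    fun hr hx => by
      rw [show s.gcd (_ • _) = s.gcd fun i => _ * _ from rfl, Finset.gcd_mul_left, hx, mul_one,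
        Int.normalize_of_nonneg hr.le]
  have hpq : p = q := by rw [← hgcd hp hz, h, hgcd hq hy]
  exact smul_right_injective _ hp.ne' (hpq ▸ h)

theorem weights_exist_unique_general (n : ℕ) (ρ : Fin (n + 1) → Fin n → ℤ)
    (hspan : ∀ x : Fin n → ℝ, ∃ a : Fin (n + 1) → ℝ, (∀ i, 0 ≤ a i) ∧
      x = ∑ i, a i • (fun j => ((ρ i j : ℤ) : ℝ))) :
    ∃! lam : Fin (n + 1) → ℤ, (∀ i, 0 < lam i) ∧ Finset.univ.gcd lam = 1 ∧
      ∑ i, lam i • ρ i = 0 := by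
  set ρℝ : Fin (n + 1) → Fin n → ℝ := fun i j => (ρ i j : ℝ)
  obtain ⟨b, hb_pos, hb⟩ := exists_pos_sum_smul_eq_zero hspan
  have hsurj : Function.Surjective (Fintype.linearCombination ℝ ρℝ) := fun x => by
    obtain ⟨a, -, ha⟩ := hspan x
    exact ⟨a, by rw [Fintype.linearCombination_apply, ha]⟩
  have hline : ∀ u : Fin (n + 1) → ℤ, ∑ i, u i • ρ i = 0 →
      ∃ c : ℝ, (fun i => (u i : ℝ)) = c • b := fun u hu =>
    exists_eq_smul_of_sum_smul_eq_zero (by simp) hsurj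
      (fun h => (hb_pos 0).ne' (congrFun h 0)) hb
      (funext fun j => by simpa [ρℝ] using congr((($hu j : ℤ) : ℝ)))
  obtain ⟨w, hw, i, hwi⟩ := (Fintype.not_linearIndependent_iff (R := ℤ) (v := ρ)).mp fun h =>
    by simpa using h.fintype_card_le_finrank
  obtain ⟨c, hc⟩ := hline w hw
  obtain ⟨s, hs⟩ := exists_mul_pos_of_cast_eq_smul hb_pos (fun h => hwi (congrFun h i)) hc
  obtain ⟨lam, hlam⟩ := exists_gcd_eq_one_pos_sum_smul_eq_zero (v := ρ) hs
    (by simp_rw [mul_smul, ← Finset.smul_sum, hw, smul_zero])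
  refine ⟨lam, hlam, fun y hy => ?_⟩
  obtain ⟨cy, hcy⟩ := hline y hy.2.2
  obtain ⟨cl, hcl⟩ := hline lam hlam.2.2
  exact eq_of_smul_eq_smul_of_gcd_eq_one (hlam.1 0) (hy.1 0) hlam.2.1 hy.2.1
    (smul_eq_smul_of_cast_eq_smul hcl hcy 0)

/-- **Existence and uniqueness of the weights of a fake weighted projective space.**
Given primitive lattice points ρ₀,…,ρₙ in N ≅ ℤⁿ spanning N_ℝ as a cone, there exist
unique positive integers λ₀,…,λₙ with gcd 1 such that λ₀ρ₀ + ⋯ + λₙρₙ = 0. -/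
theorem weights_exist_unique (n : ℕ) (ρ : Fin (n + 1) → Fin n → ℤ)
    (hprim : ∀ i, Finset.univ.gcd (ρ i) = 1)
    (hspan : ∀ x : Fin n → ℝ, ∃ a : Fin (n + 1) → ℝ, (∀ i, 0 ≤ a i) ∧
      x = ∑ i, a i • (fun j => ((ρ i j : ℤ) : ℝ))) :
    ∃! lam : Fin (n + 1) → ℤ, (∀ i, 0 < lam i) ∧ Finset.univ.gcd lam = 1 ∧
      ∑ i, lam i • ρ i = 0 :=
  weights_exist_unique_general n ρ hspan
end

section
/- Let K ⊂ ℝⁿ be a centrally symmetric convex body (convex, compact, symmetric about the origin) and let k be a positive integer. If vol(K) > 2ⁿ·k, then K contains at least k pairs {x, −x} of nonzero points of the lattice ℤⁿ; in particular, K contains at least 2k nonzero lattice points. -/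
/-!
Blichfeldt's principle with multiplicity: the number of integer translates of `s = ½K` covering a
point, integrated over a unit cube (a fundamental domain of `ℤⁿ`), equals `vol s > k`, so some
point `x` lies in `k + 1` translates `z + s`, `z ∈ V`. Every difference of two elements of `V` lies
in `½K - ½K = K`. If `m` is the lexicographically largest element of `V`, the `k` differences
`m - z`, `z ≠ m`, are lexicographically positive, hence nonzero and never negatives of one another.
-/

open MeasureTheory Set Submodule
open scoped Pointwise

namespace MeasureTheory.IsAddFundamentalDomain

variable {E L : Type*} [MeasurableSpace E] {μ : Measure E} {F s : Set E}
  [AddGroup L] [Countable L] [AddAction L E] [MeasurableSpace L] [MeasurableVAdd L E]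
  [VAddInvariantMeasure L E μ]

theorem setLIntegral_encard_mem_vadd (fund : IsAddFundamentalDomain L F μ)
    (hs : NullMeasurableSet s μ) :
    ∫⁻ x in F, {g : L | x ∈ g +ᵥ s}.encard ∂μ = μ s := by
  have hmeas (g : L) : NullMeasurableSet (g +ᵥ s) (μ.restrict F) :=
    (hs.vadd g).mono Measure.restrict_le_self
  calc ∫⁻ x in F, {g : L | x ∈ g +ᵥ s}.encard ∂μ
      = ∫⁻ x in F, ∑' g : L, (g +ᵥ s).indicator 1 x ∂μ := by
        congr! 2 with x
        rw [← ENNReal.tsum_set_one]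
        exact tsum_subtype {g : L | x ∈ g +ᵥ s} 1
    _ = ∑' g : L, μ ((g +ᵥ s) ∩ F) := by
        rw [lintegral_tsum (f := fun g => (g +ᵥ s).indicator 1)
          fun g => aemeasurable_one.indicator₀ (hmeas g)]
        refine tsum_congr fun g => ?_
        rw [lintegral_indicator_one₀ (hmeas g), Measure.restrict_apply₀ (hmeas g)]
    _ = μ s := (fund.measure_eq_tsum s).symm

theorem exists_finset_card_eq_mem_vadd (fund : IsAddFundamentalDomain L F μ)
    (hs : NullMeasurableSet s μ) {k : ℕ} (h : μ F * k < μ s) :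
    ∃ x, ∃ V : Finset L, V.card = k + 1 ∧ ∀ g ∈ V, x ∈ g +ᵥ s := by
  have ⟨x, hx⟩ : ∃ x, (k : ℕ∞) < {g : L | x ∈ g +ᵥ s}.encard := by
    by_contra! hle
    refine h.not_ge ?_
    calc μ s = ∫⁻ x in F, {g : L | x ∈ g +ᵥ s}.encard ∂μ :=
          (fund.setLIntegral_encard_mem_vadd hs).symm
      _ ≤ ∫⁻ _ in F, (k : ℕ∞) ∂μ := lintegral_mono fun x => ENat.toENNReal_le.mpr (hle x)
      _ = μ F * k := by simp [mul_comm]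
  obtain ⟨t, hts, htk⟩ := Set.exists_subset_encard_eq (Order.add_one_le_of_lt hx)
  lift t to Finset L using Set.finite_of_encard_eq_coe htk
  exact ⟨x, t, by exact_mod_cast htk, fun g hg => hts hg⟩

end MeasureTheory.IsAddFundamentalDomain

theorem mem_span_int_pi_basisFun {ι : Type*} [Finite ι] {x : ι → ℝ} :
    x ∈ span ℤ (range (Pi.basisFun ℝ ι)) ↔ ∃ z : ι → ℤ, (fun i => (z i : ℝ)) = x := by
  simp [Module.Basis.mem_span_iff_repr_mem, funext_iff, Classical.skolem]

theorem exists_finset_card_eq_sub_intCast_mem_of_lt_volume {ι : Type*} [Fintype ι]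
    {s : Set (ι → ℝ)} (hs : NullMeasurableSet s) {k : ℕ} (h : (k : ENNReal) < volume s) :
    ∃ x : ι → ℝ, ∃ V : Finset (ι → ℤ), V.card = k + 1 ∧
      ∀ z ∈ V, x - (fun i => (z i : ℝ)) ∈ s := by
  classical
  let L := (span ℤ (range (Pi.basisFun ℝ ι))).toAddSubgroup
  have : Countable L := inferInstanceAs (Countable (span ℤ (range (Pi.basisFun ℝ ι))))
  have fund := ZSpan.isAddFundamentalDomain' (Pi.basisFun ℝ ι) volume
  have hF : volume (ZSpan.fundamentalDomain (Pi.basisFun ℝ ι)) = 1 := by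
    simp [ZSpan.fundamentalDomain_pi_basisFun, volume_pi_pi]
  obtain ⟨x, V, hcard, hV⟩ := fund.exists_finset_card_eq_mem_vadd hs (by rwa [hF, one_mul])
  let embed (z : ι → ℤ) : L := ⟨fun i => (z i : ℝ), mem_span_int_pi_basisFun.mpr ⟨z, rfl⟩⟩
  have hembed : Function.Injective embed := fun z z' h => by
    ext i; simpa [embed] using congr_fun (congr_arg Subtype.val h) i
  obtain ⟨V', -, rfl⟩ := (Finset.subset_set_image_iff (s := univ) (t := V) (f := embed)).mp
    fun g _ => by
      obtain ⟨z, hz⟩ := mem_span_int_pi_basisFun.mp g.2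
      exact ⟨z, trivial, Subtype.ext hz⟩
  refine ⟨x, V', by rwa [Finset.card_image_of_injective _ hembed] at hcard, fun z hz => ?_⟩
  have := mem_vadd_set_iff_neg_vadd_mem.mp (hV (embed z) (Finset.mem_image_of_mem _ hz))
  simpa [AddSubgroup.vadd_def, embed, neg_add_eq_sub] using this

theorem Finset.exists_subset_sub_card_eq_forall_pos {G : Type*} [AddCommGroup G] [LinearOrder G]
    [IsOrderedAddMonoid G] (V : Finset G) :
    ∃ S ⊆ V - V, S.card = V.card - 1 ∧ ∀ y ∈ S, 0 < y := by
  rcases V.eq_empty_or_nonempty with rfl | hV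
  · exact ⟨∅, by simp⟩
  set m := V.max' hV
  refine ⟨(V.erase m).image (m - ·), ?_, ?_, ?_⟩
  · intro y hy
    obtain ⟨g, hg, rfl⟩ := Finset.mem_image.mp hy
    exact Finset.sub_mem_sub (V.max'_mem hV) (Finset.mem_of_mem_erase hg)
  · rw [Finset.card_image_of_injective _ sub_right_injective,
      Finset.card_erase_of_mem (V.max'_mem hV)]
  · intro y hy
    obtain ⟨g, hg, rfl⟩ := Finset.mem_image.mp hy
    exact sub_pos.mpr ((V.le_max' g (Finset.mem_of_mem_erase hg)).lt_of_ne
      (Finset.ne_of_mem_erase hg))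

theorem Finset.exists_subset_sub_card_eq_forall_ne_neg {ι : Type*} [LinearOrder ι] [Fintype ι]
    (V : Finset (ι → ℤ)) :
    ∃ S ⊆ V - V, S.card = V.card - 1 ∧ ∀ y ∈ S, y ≠ 0 ∧ ∀ y' ∈ S, y ≠ -y' := by
  obtain ⟨S, hSV, hcard, hpos⟩ := (V.map toLex.toEmbedding).exists_subset_sub_card_eq_forall_pos
  refine ⟨S.map ofLex.toEmbedding, ?_, by simpa using hcard, ?_⟩
  · intro y hy
    simp only [Finset.subset_iff, Finset.mem_sub, Finset.mem_map] at hSV hy ⊢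
    obtain ⟨y, hyS, rfl⟩ := hy
    obtain ⟨_, ⟨a, ha, rfl⟩, _, ⟨b, hb, rfl⟩, hab⟩ := hSV hyS
    exact ⟨a, ha, b, hb, congr_arg ofLex hab⟩
  · simp only [Finset.mem_map, forall_exists_index, and_imp]
    rintro _ y hy rfl
    refine ⟨fun h => (hpos y hy).ne' (ofLex_inj.mp h), ?_⟩
    rintro _ y' hy' rfl h
    have hneg : y = -y' := h
    exact (neg_neg_of_pos (hpos y' hy')).not_gt (hneg ▸ hpos y hy)

theorem Convex.sub_mem_of_mem_inv_two_smul {𝕜 E : Type*} [Field 𝕜] [LinearOrder 𝕜]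
    [IsStrictOrderedRing 𝕜] [AddCommGroup E] [Module 𝕜 E] {K : Set E} (hconv : Convex 𝕜 K)
    (hsymm : ∀ x ∈ K, -x ∈ K) {a b : E} (ha : a ∈ (2⁻¹ : 𝕜) • K) (hb : b ∈ (2⁻¹ : 𝕜) • K) :
    a - b ∈ K := by
  obtain ⟨a, ha, rfl⟩ := ha
  obtain ⟨b, hb, rfl⟩ := hb
  simpa [sub_eq_add_neg] using
    hconv ha (hsymm b hb) (by norm_num : (0 : 𝕜) ≤ 2⁻¹) (by norm_num) (by norm_num)

theorem van_der_corput_general (n k : ℕ) (K : Set (Fin n → ℝ))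
    (hconv : Convex ℝ K)
    (hsymm : ∀ x ∈ K, -x ∈ K)
    (hvol : (2 : ENNReal) ^ n * k < volume K) :
    ∃ S : Finset (Fin n → ℤ), k ≤ S.card ∧
      (∀ x ∈ S, x ≠ 0 ∧ (fun j => ((x j : ℤ) : ℝ)) ∈ K) ∧
      (∀ x ∈ S, ∀ y ∈ S, x ≠ -y) := by
  have hhalf : (k : ENNReal) < volume ((2⁻¹ : ℝ) • K) := by
    rw [Measure.addHaar_smul_of_nonneg volume (by norm_num : (0 : ℝ) ≤ 2⁻¹),
      Module.finrank_fin_fun, ENNReal.ofReal_pow (by norm_num), ENNReal.ofReal_inv_of_pos two_pos,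
      ENNReal.ofReal_ofNat, ← ENNReal.inv_pow, ← ENNReal.div_eq_inv_mul,
      ENNReal.lt_div_iff_mul_lt (by simp) (by simp), mul_comm]
    exact hvol
  obtain ⟨x, V, hcard, hV⟩ := exists_finset_card_eq_sub_intCast_mem_of_lt_volume
    ((hconv.smul _).nullMeasurableSet _) hhalf
  obtain ⟨S, hSV, hScard, hS⟩ := V.exists_subset_sub_card_eq_forall_ne_neg
  refine ⟨S, by omega, fun y hy => ⟨(hS y hy).1, ?_⟩, fun y hy y' hy' => (hS y hy).2 y' hy'⟩
  obtain ⟨a, ha, b, hb, rfl⟩ := Finset.mem_sub.mp (hSV hy)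
  convert hconv.sub_mem_of_mem_inv_two_smul hsymm (hV b hb) (hV a ha) using 1
  ext j
  simp

/-- **Van der Corput's generalization of Minkowski's theorem.**
If K ⊂ ℝⁿ is a centrally symmetric convex body with volume > 2ⁿ·k, then K contains
at least k pairs {x, −x} of nonzero lattice points: there is a set S of at least k
nonzero lattice points of K, no two of which are negatives of each other (so together
with their negatives, which also lie in K by symmetry, they give at least 2k nonzero
lattice points of K). -/
theorem van_der_corput (n k : ℕ) (hk : 0 < k) (K : Set (Fin n → ℝ))
    (hconv : Convex ℝ K) (hcomp : IsCompact K)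
    (hsymm : ∀ x ∈ K, -x ∈ K)
    (hvol : (2 : ENNReal) ^ n * k < volume K) :
    ∃ S : Finset (Fin n → ℤ), k ≤ S.card ∧
      (∀ x ∈ S, x ≠ 0 ∧ (fun j => ((x j : ℤ) : ℝ)) ∈ K) ∧
      (∀ x ∈ S, ∀ y ∈ S, x ≠ -y) :=
  van_der_corput_general n k K hconv hsymm hvol
end

section
/- Let λ₀ ≤ λ₁ ≤ … ≤ λₙ be positive integers with gcd 1 and h := Σᵢ λᵢ, and suppose P = conv(ρ₀,…,ρₙ) ⊂ ℤⁿ is a simplex with Σᵢ λᵢρᵢ = 0 whose only interior lattice point is the origin (the 'canonical' condition). Then for every k ∈ {2,…,n}: λ_k/h ≤ 1/(n−k+2). -/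
/-- The real vector associated to an integer vector. -/
def coeVec {n : ℕ} (v : Fin n → ℤ) : Fin n → ℝ := fun j => (v j : ℝ)

/-!
Suppose `λ_k / h > 1 / (n - k + 2)` and put `S = {k, …, n}`, so that `m := |S| + 1 = n - k + 2`.
By monotonicity `m λ_i > h` for every `i ∈ S`, so the weights `m λ_i / h - [i ∈ S]` are positive;
they sum to `m - |S| = 1`, and by `Σ λ_i ρ_i = 0` they represent the lattice point `-Σ_{i ∈ S} ρ_i`.
This point therefore lies in the interior of `P`, and by canonicity `Σ_{i ∈ S} ρ_i = 0`.
Then `|S| λ_i - h [i ∈ S]` is a vanishing affine dependence of the vertices with non-zero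
coefficient `|S| λ_0` at `0 ∉ S`, contradicting affine independence.
-/

open Finset

theorem AffineIndependent.sum_ne_zero_of_sum_smul_eq_zero {k V ι : Type*} [Field k] [CharZero k]
    [AddCommGroup V] [Module k V] [Fintype ι] {p : ι → V} (hp : AffineIndependent k p)
    {lam : ι → k} (hrel : ∑ i, lam i • p i = 0) {S : Finset ι} (hS : S.Nonempty) {j : ι}
    (hj : j ∉ S) (hlam : lam j ≠ 0) : ∑ i ∈ S, p i ≠ 0 := by
  classical
  intro hSp
  set w : ι → k := fun i => (#S : k) * lam i - (∑ i, lam i) * if i ∈ S then 1 else 0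
  have hw₀ : ∑ i, w i = 0 := by
    simp only [w, sum_sub_distrib, ← mul_sum, sum_ite_mem, univ_inter, sum_const,
      nsmul_eq_mul, mul_one]
    ring
  have hw₁ : ∑ i, w i • p i = 0 := by
    simp only [w, sub_smul, sum_sub_distrib, mul_smul, ← smul_sum, hrel, mul_ite, mul_one,
      mul_zero, ite_smul, zero_smul, sum_ite_mem, univ_inter, hSp, smul_zero, sub_zero]
  have hwj := hp.eq_zero_of_sum_eq_zero hw₀ hw₁ j (mem_univ j)
  simp only [w, hj, if_false, mul_zero, sub_zero, mul_eq_zero, Nat.cast_eq_zero,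
    card_eq_zero] at hwj
  exact hwj.elim hS.ne_empty hlam

theorem AffineBasis.sum_smul_mem_interior_convexHull {ι V : Type*} [Fintype ι]
    [NormedAddCommGroup V] [NormedSpace ℝ V] (b : AffineBasis ι ℝ V) {w : ι → ℝ}
    (hw : ∑ i, w i = 1) (hpos : ∀ i, 0 < w i) :
    ∑ i, w i • b i ∈ interior (convexHull ℝ (Set.range b)) := by
  rw [b.interior_convexHull]
  intro i
  rw [← univ.affineCombination_eq_linear_combination b w hw,
    b.coord_apply_combination_of_mem (mem_univ i) hw]
  exact hpos i

theorem AffineBasis.neg_sum_mem_interior_convexHull {ι V : Type*} [Fintype ι]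
    [NormedAddCommGroup V] [NormedSpace ℝ V] (b : AffineBasis ι ℝ V) {lam : ι → ℝ}
    (hpos : ∀ i, 0 < lam i) (hrel : ∑ i, lam i • b i = 0) {S : Finset ι}
    (hS : ∀ i ∈ S, ∑ j, lam j < lam i * (#S + 1)) :
    -∑ i ∈ S, b i ∈ interior (convexHull ℝ (Set.range b)) := by
  classical
  set h := ∑ j, lam j
  have hh : 0 < h := by
    obtain ⟨i⟩ : Nonempty ι := b.nonempty
    exact sum_pos (fun j _ => hpos j) ⟨i, mem_univ i⟩
  set w : ι → ℝ := fun i => (#S + 1) / h * lam i - if i ∈ S then 1 else 0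
  have hw : ∑ i, w i = 1 := by
    simp only [w, sum_sub_distrib, ← mul_sum, sum_ite_mem, univ_inter, sum_const,
      nsmul_eq_mul, mul_one]
    rw [div_mul_cancel₀ _ hh.ne']
    ring
  have hwpos : ∀ i, 0 < w i := by
    intro i
    by_cases hi : i ∈ S
    · simp only [w, hi, if_true, sub_pos, div_mul_eq_mul_div, one_lt_div hh, mul_comm _ (lam i)]
      exact hS i hi
    · simp only [w, hi, if_false, sub_zero]
      exact mul_pos (div_pos (by positivity) hh) (hpos i)
  have hcomb : ∑ i, w i • b i = -∑ i ∈ S, b i := by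
    simp only [w, sub_smul, sum_sub_distrib, mul_smul, ← smul_sum, hrel, smul_zero, zero_sub,
      ite_smul, one_smul, zero_smul, sum_ite_mem, univ_inter]
  rw [← hcomb]
  exact b.sum_smul_mem_interior_convexHull hw hwpos

theorem coeVec_neg {n : ℕ} (v : Fin n → ℤ) : coeVec (-v) = -coeVec v := by
  ext j
  simp [coeVec]

theorem coeVec_sum {n : ℕ} {ι : Type*} (s : Finset ι) (v : ι → Fin n → ℤ) :
    coeVec (∑ i ∈ s, v i) = ∑ i ∈ s, coeVec (v i) := by
  ext j
  simp [coeVec]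

theorem coeVec_sum_smul {n : ℕ} {ι : Type*} (s : Finset ι) (a : ι → ℤ) (v : ι → Fin n → ℤ) :
    coeVec (∑ i ∈ s, a i • v i) = ∑ i ∈ s, (a i : ℝ) • coeVec (v i) := by
  ext j
  simp [coeVec]

theorem coeVec_eq_zero {n : ℕ} {v : Fin n → ℤ} : coeVec v = 0 ↔ v = 0 := by
  simp [coeVec, funext_iff]

theorem exists_mul_card_add_one_le_sum_of_canonical {n : ℕ} {ι : Type*} [Fintype ι]
    {ρ : ι → Fin n → ℤ} {lam : ι → ℤ} (hpos : ∀ i, 0 < lam i) (hrel : ∑ i, lam i • ρ i = 0)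
    (haff : AffineIndependent ℝ (fun i => coeVec (ρ i)))
    (hspan : affineSpan ℝ (Set.range fun i => coeVec (ρ i)) = ⊤)
    (hcan : ∀ x : Fin n → ℤ,
      coeVec x ∈ interior (convexHull ℝ (Set.range fun i => coeVec (ρ i))) → x = 0)
    {S : Finset ι} (hS : S.Nonempty) {j : ι} (hj : j ∉ S) :
    ∃ i ∈ S, lam i * (#S + 1) ≤ ∑ i, lam i := by
  have hposR : ∀ i, (0 : ℝ) < lam i := fun i => Int.cast_pos.mpr (hpos i)
  have hrelR : ∑ i, (lam i : ℝ) • coeVec (ρ i) = 0 := by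
    rw [← coeVec_sum_smul, hrel, coeVec_eq_zero]
  by_contra! hbig
  let b : AffineBasis ι ℝ (Fin n → ℝ) := ⟨_, haff, hspan⟩
  have hzero : -∑ i ∈ S, ρ i = 0 := by
    refine hcan _ ?_
    rw [coeVec_neg, coeVec_sum]
    exact b.neg_sum_mem_interior_convexHull hposR hrelR fun i hi => by exact_mod_cast hbig i hi
  refine haff.sum_ne_zero_of_sum_smul_eq_zero hrelR hS hj (hposR j).ne' ?_
  rw [← coeVec_sum, coeVec_eq_zero, ← neg_eq_zero, hzero]

theorem canonical_weight_bound_general (n : ℕ) (ρ : Fin (n + 1) → Fin n → ℤ)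
    (lam : Fin (n + 1) → ℤ) (hpos : ∀ i, 0 < lam i) (hmono : Monotone lam)
    (hrel : ∑ i, lam i • ρ i = 0)
    (haff : AffineIndependent ℝ (fun i => coeVec (ρ i)))
    (P : Set (Fin n → ℝ))
    (hP : P = convexHull ℝ (Set.range fun i => coeVec (ρ i)))
    (hcan : ∀ x : Fin n → ℤ, coeVec x ∈ interior P → x = 0) :
    ∀ k : Fin (n + 1), 2 ≤ k.val →
      (lam k : ℝ) / (∑ i, (lam i : ℝ)) ≤ 1 / ((n : ℝ) - (k.val : ℝ) + 2) := by
  intro k hk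
  subst hP
  have hspan : affineSpan ℝ (Set.range fun i => coeVec (ρ i)) = ⊤ := by
    simp [haff.affineSpan_eq_top_iff_card_eq_finrank_add_one]
  have h0 : (0 : Fin (n + 1)) ∉ Ici k := by
    simp only [mem_Ici, Fin.le_iff_val_le_val, Fin.val_zero]
    omega
  obtain ⟨i, hi, hle⟩ := exists_mul_card_add_one_le_sum_of_canonical hpos hrel haff hspan hcan
    ⟨k, mem_Ici.mpr le_rfl⟩ h0
  have hcard : (#(Ici k) : ℝ) + 1 = n - k + 2 := by
    rw [Fin.card_Ici, Nat.cast_sub k.isLt.le]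
    push_cast
    ring
  have hki : (lam k : ℝ) * (n - k + 2) ≤ ∑ i, (lam i : ℝ) := by
    rw [← hcard]
    calc (lam k : ℝ) * (#(Ici k) + 1) ≤ lam i * (#(Ici k) + 1) := by
          gcongr; exact hmono (mem_Ici.mp hi)
      _ ≤ ∑ i, (lam i : ℝ) := by exact_mod_cast hle
  rw [div_le_div_iff₀ (sum_pos (fun i _ => Int.cast_pos.mpr (hpos i)) univ_nonempty)
    (by linarith), one_mul]
  exact hki

/-- **Upper bound on the weights of a canonical fake weighted projective space.**
Let λ₀ ≤ λ₁ ≤ … ≤ λₙ be positive integers with gcd 1, h = Σλᵢ, and let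
P = conv(ρ₀,…,ρₙ) be a simplex with primitive vertices in ℤⁿ satisfying Σλᵢρᵢ = 0,
whose only interior lattice point is the origin. Then for every k with 2 ≤ k ≤ n,
λ_k/h ≤ 1/(n−k+2). -/
theorem canonical_weight_bound (n : ℕ) (ρ : Fin (n + 1) → Fin n → ℤ)
    (lam : Fin (n + 1) → ℤ) (hpos : ∀ i, 0 < lam i) (hmono : Monotone lam)
    (hgcd : Finset.univ.gcd lam = 1)
    (hprim : ∀ i, Finset.univ.gcd (ρ i) = 1)
    (hrel : ∑ i, lam i • ρ i = 0)
    (haff : AffineIndependent ℝ (fun i => coeVec (ρ i)))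
    (P : Set (Fin n → ℝ))
    (hP : P = convexHull ℝ (Set.range fun i => coeVec (ρ i)))
    (h0 : (0 : Fin n → ℝ) ∈ interior P)
    (hcan : ∀ x : Fin n → ℤ, coeVec x ∈ interior P → x = 0) :
    ∀ k : Fin (n + 1), 2 ≤ k.val →
      (lam k : ℝ) / (∑ i, (lam i : ℝ)) ≤ 1 / ((n : ℝ) - (k.val : ℝ) + 2) :=
  canonical_weight_bound_general n ρ lam hpos hmono hrel haff P hP hcan
end

section
/- Let ρ'₀,…,ρ'ₙ ∈ ℤⁿ be primitive lattice vectors generating ℤⁿ with Σᵢ λᵢρ'ᵢ = 0 (λᵢ positive integers, gcd 1). Then for every i, the lattice generated by {ρ'₀,…,ρ'ₙ} \ {ρ'ᵢ} has index λᵢ in ℤⁿ; equivalently, |det(ρ'₀,…,ρ̂'ᵢ,…,ρ'ₙ)| = λᵢ. -/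
/-!
Let `A` be the `n × (n + 1)` matrix with columns `ρ'ⱼ` and `Dⱼ = |det A_ĵ|` its maximal minors.
Cramer's rule applied to `λᵢ ρ'ᵢ = -∑_{j ≠ i} λⱼ ρ'ⱼ` gives `λᵢ Dⱼ = λⱼ Dᵢ`, so `D` and `λ` are
proportional. Since the `ρ'ⱼ` generate `ℤⁿ`, `A` has an integral right inverse `C`, and expanding
`1 = det (A C)` multilinearly in the columns of `A` shows `gcd D = 1`. Two proportional
nonnegative vectors with gcd `1` coincide.
-/

open Finset

namespace Matrix

variable {m κ R : Type*}

theorem abs_det_submatrix_of_range_subset [Fintype m] [DecidableEq m] [CommRing R]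
    [LinearOrder R] [IsStrictOrderedRing R] (A : Matrix m κ R) {f g : m → κ}
    (hf : Function.Injective f) (hfg : Set.range f ⊆ Set.range g) :
    |(A.submatrix id f).det| = |(A.submatrix id g).det| := by
  choose σ hσ using fun s => hfg ⟨s, rfl⟩
  have hσinj : Function.Injective σ := fun a b hab => hf (by rw [← hσ a, ← hσ b, hab])
  let e := Equiv.ofBijective σ (Finite.injective_iff_bijective.mp hσinj)
  have : A.submatrix id f = (A.submatrix id g).submatrix (Equiv.refl m) e := by
    ext r s; simp [e, hσ]
  rw [this, abs_det_submatrix_equiv_equiv]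

theorem det_mul_eq_sum_prod_mul_det_submatrix [Fintype m] [DecidableEq m] [Fintype κ]
    [CommRing R] (A : Matrix m κ R) (B : Matrix κ m R) :
    (A * B).det = ∑ p : m → κ, (∏ i, B (p i) i) * (A.submatrix id p).det := by
  simp only [det_apply', mul_apply, prod_univ_sum, mul_sum, Fintype.piFinset_univ,
    submatrix_apply, id]
  rw [sum_comm]
  refine sum_congr rfl fun p _ => sum_congr rfl fun σ _ => ?_
  rw [prod_mul_distrib]; ring

theorem cramer_mulVec [Fintype m] [DecidableEq m] [CommRing R] (A : Matrix m m R) (v : m → R) :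
    A.cramer (A *ᵥ v) = A.det • v := by
  rw [cramer_eq_adjugate_mulVec, mulVec_mulVec, adjugate_mul, smul_mulVec, one_mulVec]

theorem abs_mul_abs_det_submatrix_succAbove [CommRing R] [LinearOrder R] [IsStrictOrderedRing R]
    {n : ℕ} (A : Matrix (Fin n) (Fin (n + 1)) R) {x : Fin (n + 1) → R} (hx : A *ᵥ x = 0)
    (i j : Fin (n + 1)) :
    |x i| * |(A.submatrix id j.succAbove).det| = |x j| * |(A.submatrix id i.succAbove).det| := by
  rcases eq_or_ne j i with rfl | hji
  · rfl
  obtain ⟨t, rfl⟩ := Fin.exists_succAbove_eq hji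
  set B := A.submatrix id i.succAbove
  have hB : B *ᵥ (x ∘ i.succAbove) = -x i • (fun r => A r i) := by
    ext r
    have hr := congrFun hx r
    simp only [mulVec, dotProduct, Fin.sum_univ_succAbove _ i, Pi.zero_apply] at hr
    simp only [B, mulVec, dotProduct, submatrix_apply, id, Function.comp_apply, Pi.smul_apply,
      smul_eq_mul]
    linear_combination hr
  have hupdate : B.updateCol t (fun r => A r i) =
      A.submatrix id (Equiv.swap i (i.succAbove t) ∘ i.succAbove) := by
    ext r s
    rcases eq_or_ne s t with rfl | hst
    · simp
    · rw [updateCol_ne hst]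
      simp [B, Equiv.swap_apply_of_ne_of_ne (Fin.succAbove_ne i s)
        (Fin.succAbove_right_injective.ne hst)]
  have hrange : Set.range (Equiv.swap i (i.succAbove t) ∘ i.succAbove) ⊆
      Set.range (i.succAbove t).succAbove := by
    rintro _ ⟨s, rfl⟩
    simp [Equiv.swap_apply_eq_iff, Fin.succAbove_ne]
  have hcramer := congrFun (cramer_mulVec B (x ∘ i.succAbove)) t
  rw [hB, map_smul, Pi.smul_apply, cramer_apply, hupdate] at hcramer
  have := congrArg abs hcramer
  simp only [smul_eq_mul, Pi.smul_apply, Function.comp_apply, abs_mul, abs_neg,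
    abs_det_submatrix_of_range_subset A ((Equiv.injective _).comp Fin.succAbove_right_injective)
      hrange] at this
  rw [this, mul_comm]

theorem exists_mul_eq_one_of_span_range_eq_top [DecidableEq m] [Fintype κ] [CommRing R]
    {v : κ → m → R} (hv : Submodule.span R (Set.range v) = ⊤) :
    ∃ C : Matrix κ m R, (of v)ᵀ * C = 1 := by
  have hsingle (r : m) : ∃ c : κ → R, ∑ j, c j • v j = Pi.single r 1 :=
    (Submodule.mem_span_range_iff_exists_fun R).mp (hv ▸ Submodule.mem_top)
  choose c hc using hsingle
  refine ⟨of fun j r => c r j, ?_⟩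
  ext k r
  have := congrFun (hc r) k
  simp only [Finset.sum_apply, Pi.smul_apply, smul_eq_mul, Pi.single_apply] at this
  simp only [mul_apply, transpose_apply, of_apply, one_apply, ← this, mul_comm]

theorem gcd_abs_det_submatrix_succAbove_eq_one {n : ℕ} (A : Matrix (Fin n) (Fin (n + 1)) ℤ)
    {C : Matrix (Fin (n + 1)) (Fin n) ℤ} (hAC : A * C = 1) :
    univ.gcd (fun j : Fin (n + 1) => |(A.submatrix id j.succAbove).det|) = 1 := by
  set g := univ.gcd (fun j : Fin (n + 1) => |(A.submatrix id j.succAbove).det|) with hg_def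
  have hdvd (p : Fin n → Fin (n + 1)) : g ∣ (A.submatrix id p).det := by
    by_cases hp : Function.Injective p
    · obtain ⟨j, hj⟩ : ∃ j, j ∉ Set.range p := by
        by_contra! hsurj
        simpa using Fintype.card_le_of_surjective p hsurj
      rw [← dvd_abs, abs_det_submatrix_of_range_subset A hp
        (by rwa [Fin.range_succAbove, Set.subset_compl_singleton_iff])]
      exact gcd_dvd (mem_univ j)
    · obtain ⟨a, b, hab, hne⟩ := Function.not_injective_iff.mp hp
      rw [det_zero_of_column_eq hne (by simp [hab])]
      exact dvd_zero g
  have hg : g ∣ (A * C).det := by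
    rw [det_mul_eq_sum_prod_mul_det_submatrix]
    exact dvd_sum fun p _ => dvd_mul_of_dvd_right (hdvd p) _
  rw [hAC, det_one] at hg
  have hunit := normalize_eq_one.mpr (isUnit_of_dvd_one hg)
  rwa [hg_def, Finset.normalize_gcd] at hunit

end Matrix

theorem Int.eq_of_mul_eq_mul_of_gcd_eq_one {ι : Type*} [Fintype ι] {a b : ι → ℤ}
    (hab : ∀ j k, a j * b k = a k * b j) (ha : univ.gcd a = 1) (hb : univ.gcd b = 1) {i : ι}
    (hai : 0 ≤ a i) (hbi : 0 ≤ b i) : a i = b i :=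
  calc a i = univ.gcd (fun j => a i * b j) := by
        rw [Finset.gcd_mul_left, hb, mul_one, Int.normalize_of_nonneg hai]
    _ = univ.gcd (fun j => b i * a j) := by simp only [hab i, mul_comm]
    _ = b i := by rw [Finset.gcd_mul_left, ha, mul_one, Int.normalize_of_nonneg hbi]

theorem facet_determinant_general (n : ℕ) (ρ : Fin (n + 1) → Fin n → ℤ)
    (hgen : Submodule.span ℤ (Set.range ρ) = ⊤)
    (lam : Fin (n + 1) → ℤ) (hpos : ∀ i, 0 < lam i)
    (hgcd : Finset.univ.gcd lam = 1)
    (hrel : ∑ i, lam i • ρ i = 0) :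
    ∀ i : Fin (n + 1),
      |Matrix.det (Matrix.of fun r s : Fin n => ρ (i.succAbove s) r)| = lam i := by
  intro i
  set A : Matrix (Fin n) (Fin (n + 1)) ℤ := (Matrix.of ρ).transpose
  change |(A.submatrix id i.succAbove).det| = lam i
  have hker : A.mulVec lam = 0 := by
    ext r
    have hr := congrFun hrel r
    simp only [Finset.sum_apply, Pi.smul_apply, smul_eq_mul, Pi.zero_apply] at hr
    simp only [A, Matrix.mulVec, dotProduct, Matrix.transpose_apply, Matrix.of_apply,
      Pi.zero_apply, ← hr, mul_comm]
  obtain ⟨C, hAC⟩ := Matrix.exists_mul_eq_one_of_span_range_eq_top hgen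
  have hminors := Matrix.gcd_abs_det_submatrix_succAbove_eq_one A hAC
  have hcross (j k : Fin (n + 1)) :
      |(A.submatrix id j.succAbove).det| * lam k = |(A.submatrix id k.succAbove).det| * lam j := by
    have := A.abs_mul_abs_det_submatrix_succAbove hker j k
    rw [abs_of_pos (hpos j), abs_of_pos (hpos k)] at this
    linear_combination -this
  exact Int.eq_of_mul_eq_mul_of_gcd_eq_one hcross hminors hgcd (abs_nonneg _) (hpos i).le

/-- **Facet determinants of the weighted projective simplex.**
If the primitive lattice vectors ρ'₀,…,ρ'ₙ generate ℤⁿ and satisfy Σᵢ λᵢρ'ᵢ = 0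
(λᵢ ∈ ℤ_{>0}, gcd 1), then for every i the determinant of the n×n matrix whose
columns are the ρ'ⱼ, j ≠ i, has absolute value λᵢ; equivalently the lattice they
generate has index λᵢ in ℤⁿ. -/
theorem facet_determinant (n : ℕ) (ρ : Fin (n + 1) → Fin n → ℤ)
    (hprim : ∀ i, Finset.univ.gcd (ρ i) = 1)
    (hgen : Submodule.span ℤ (Set.range ρ) = ⊤)
    (lam : Fin (n + 1) → ℤ) (hpos : ∀ i, 0 < lam i)
    (hgcd : Finset.univ.gcd lam = 1)
    (hrel : ∑ i, lam i • ρ i = 0) :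
    ∀ i : Fin (n + 1),
      |Matrix.det (Matrix.of fun r s : Fin n => ρ (i.succAbove s) r)| = lam i :=
  facet_determinant_general n ρ hgen lam hpos hgcd hrel
end

section
/- Let P (resp. P') be the simplex of the Gorenstein weighted projective space ℙ(λ₀,…,λₙ) (resp. of a Gorenstein fake weighted projective space with the same weights), both reflexive. Assume: (a) vol-based formula mult Q = n!·vol(Q)/h for any simplex Q with these weights (h = Σλᵢ), and (b) the dual P'^∨ is again a fake weighted projective simplex with the same weights, with P'^∨ = (Hᵀ)⁻¹P^∨ for H ∈ Herm(n, mult P'). Then mult P' divides mult P^∨. -/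
open MeasureTheory

/-- The dual polytope Q^∨ = { u : ⟨u,v⟩ ≥ −1 for all v ∈ Q }. -/
def dualPolytope {n : ℕ} (Q : Set (Fin n → ℝ)) : Set (Fin n → ℝ) :=
  {u | ∀ v ∈ Q, -1 ≤ ∑ i, u i * v i}

/-- A lattice polytope: the convex hull of finitely many lattice points. -/
def IsLatticePolytope {n : ℕ} (Q : Set (Fin n → ℝ)) : Prop :=
  ∃ S : Finset (Fin n → ℤ), Q = convexHull ℝ (coeVec '' (S : Set (Fin n → ℤ)))

/-- A reflexive polytope. -/
def IsReflexive {n : ℕ} (Q : Set (Fin n → ℝ)) : Prop :=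
  IsLatticePolytope Q ∧ (0 : Fin n → ℝ) ∈ interior Q ∧ IsLatticePolytope (dualPolytope Q)

/-- The multiplicity of a lattice simplex with vertices ρ₀,…,ρₙ. -/
noncomputable def multOf {n : ℕ} (ρ : Fin (n + 1) → Fin n → ℤ) : ℕ :=
  Nat.card ((Fin n → ℤ) ⧸ Submodule.span ℤ (Set.range ρ))

/-- Herm(n,k): lower-triangular nonnegative integer matrices of determinant k with
off-diagonal entries h_{ij} ∈ {0,…,h_{jj}−1} for i > j. -/
def Herm (n : ℕ) (k : ℕ) : Set (Matrix (Fin n) (Fin n) ℤ) :=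
  {H | (∀ i j : Fin n, i < j → H i j = 0) ∧ (∀ i j : Fin n, 0 ≤ H i j) ∧
    (∀ i j : Fin n, j < i → H i j < H j j) ∧ H.det = (k : ℤ)}

/-! The dual simplex of the fake weighted projective space is the image of `P^∨` under
`(Hᵀ)⁻¹`, which scales volumes by `1 / det H = 1 / mult P'`; comparing the volume formulas
for `P^∨` and `P'^∨` gives `mult P^∨ = mult P' · mult P'^∨`. The factor `h / n!` cancels because
it is nonzero, which is read off the positive volume of the full-dimensional simplex `P'`. -/

lemma volume_image_transpose_inv_mulVec {ι : Type*} [Fintype ι] [DecidableEq ι]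
    (M : Matrix ι ι ℝ) (s : Set (ι → ℝ)) :
    volume ((fun v => M.transpose⁻¹.mulVec v) '' s) = ENNReal.ofReal |M.det|⁻¹ * volume s := by
  change volume (Matrix.toLin' M.transpose⁻¹ '' s) = _
  rw [Measure.addHaar_image_linearMap, LinearMap.det_toLin', Matrix.det_nonsing_inv,
    Matrix.det_transpose, Ring.inverse_eq_inv', abs_inv]

lemma eq_mul_of_ofReal_mul_eq_inv_mul {a : ℝ} {c m m' : ℕ} (hc : 0 < a * c)
    (h : ENNReal.ofReal (a * m') = ENNReal.ofReal (c : ℝ)⁻¹ * ENNReal.ofReal (a * m)) :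
    m = c * m' := by
  have ha : 0 < a := pos_of_mul_pos_left hc c.cast_nonneg
  have hc' : (c : ℝ) ≠ 0 := (pos_of_mul_pos_right hc ha.le).ne'
  rw [← ENNReal.ofReal_mul (by positivity),
    ENNReal.ofReal_eq_ofReal_iff (by positivity) (by positivity)] at h
  have hreal : (m : ℝ) = c * m' := by
    field_simp at h
    linarith
  exact_mod_cast hreal

theorem mult_divides_dual_mult_general (n : ℕ) (lam : Fin (n + 1) → ℤ)
    (ρ ρ' ρd ρ'd : Fin (n + 1) → Fin n → ℤ)
    (hreflP' : IsReflexive (convexHull ℝ (Set.range fun i => coeVec (ρ' i))))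
    (hd : convexHull ℝ (Set.range fun i => coeVec (ρd i)) =
      dualPolytope (convexHull ℝ (Set.range fun i => coeVec (ρ i))))
    (hd' : convexHull ℝ (Set.range fun i => coeVec (ρ'd i)) =
      dualPolytope (convexHull ℝ (Set.range fun i => coeVec (ρ' i))))
    (ha : ∀ τ : Fin (n + 1) → Fin n → ℤ, (τ = ρ' ∨ τ = ρd ∨ τ = ρ'd) →
      volume (convexHull ℝ (Set.range fun i => coeVec (τ i))) =
        ENNReal.ofReal ((∑ i, (lam i : ℝ)) * (multOf τ : ℝ) / (n.factorial : ℝ)))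
    (H : Matrix (Fin n) (Fin n) ℤ) (hH : H ∈ Herm n (multOf ρ'))
    (hb : dualPolytope (convexHull ℝ (Set.range fun i => coeVec (ρ' i))) =
      (fun v => ((H.map ((↑) : ℤ → ℝ)).transpose)⁻¹.mulVec v) ''
        dualPolytope (convexHull ℝ (Set.range fun i => coeVec (ρ i)))) :
    multOf ρ' ∣ multOf ρd := by
  have hvol : ∀ τ, (τ = ρ' ∨ τ = ρd ∨ τ = ρ'd) →
      volume (convexHull ℝ (Set.range fun i => coeVec (τ i))) =
        ENNReal.ofReal ((∑ i, (lam i : ℝ)) / n.factorial * multOf τ) := fun τ hτ => by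
    rw [ha τ hτ, mul_div_right_comm]
  have hP'pos : 0 < (∑ i, (lam i : ℝ)) / n.factorial * multOf ρ' := by
    rw [← ENNReal.ofReal_pos, ← hvol ρ' (Or.inl rfl)]
    exact Measure.measure_pos_of_nonempty_interior _ ⟨0, hreflP'.2.1⟩
  have hdetH : (H.map ((↑) : ℤ → ℝ)).det = multOf ρ' := by
    rw [← Int.cast_det, hH.2.2.2, Int.cast_natCast]
  have hscale := volume_image_transpose_inv_mulVec (H.map ((↑) : ℤ → ℝ))
    (dualPolytope (convexHull ℝ (Set.range fun i => coeVec (ρ i))))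
  rw [← hb, ← hd', ← hd, hdetH, Nat.abs_cast, hvol ρ'd (by tauto), hvol ρd (by tauto)] at hscale
  exact Dvd.intro _ (eq_mul_of_ofReal_mul_eq_inv_mul hP'pos hscale).symm

/-- **mult P' divides mult P^∨ for Gorenstein fake weighted projective spaces.**
Let P be the reflexive simplex of the Gorenstein weighted projective space
ℙ(λ₀,…,λₙ) (vertices ρ generate ℤⁿ with Σλᵢρᵢ = 0), and P' the reflexive simplex of a
Gorenstein fake weighted projective space with the same weights (vertices ρ',
Σλᵢρ'ᵢ = 0). Let ρd, ρ'd be the vertices of the dual simplices P^∨, P'^∨. Assume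
(a) vol(Q) = (h/n!)·mult Q for Q ∈ {P', P^∨, P'^∨}, and (b) P'^∨ = (Hᵀ)⁻¹·P^∨ for some
H ∈ Herm(n, mult P'). Then mult P' divides mult P^∨. -/
theorem mult_divides_dual_mult (n : ℕ) (lam : Fin (n + 1) → ℤ)
    (hpos : ∀ i, 0 < lam i) (hgcd : Finset.univ.gcd lam = 1)
    (ρ ρ' ρd ρ'd : Fin (n + 1) → Fin n → ℤ)
    (hgen : Submodule.span ℤ (Set.range ρ) = ⊤)
    (hrel : ∑ i, lam i • ρ i = 0) (hrel' : ∑ i, lam i • ρ' i = 0)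
    (haff' : AffineIndependent ℝ (fun i => coeVec (ρ' i)))
    (hreflP : IsReflexive (convexHull ℝ (Set.range fun i => coeVec (ρ i))))
    (hreflP' : IsReflexive (convexHull ℝ (Set.range fun i => coeVec (ρ' i))))
    (hd : convexHull ℝ (Set.range fun i => coeVec (ρd i)) =
      dualPolytope (convexHull ℝ (Set.range fun i => coeVec (ρ i))))
    (hd' : convexHull ℝ (Set.range fun i => coeVec (ρ'd i)) =
      dualPolytope (convexHull ℝ (Set.range fun i => coeVec (ρ' i))))
    (ha : ∀ τ : Fin (n + 1) → Fin n → ℤ, (τ = ρ' ∨ τ = ρd ∨ τ = ρ'd) →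
      volume (convexHull ℝ (Set.range fun i => coeVec (τ i))) =
        ENNReal.ofReal ((∑ i, (lam i : ℝ)) * (multOf τ : ℝ) / (n.factorial : ℝ)))
    (H : Matrix (Fin n) (Fin n) ℤ) (hH : H ∈ Herm n (multOf ρ'))
    (hb : dualPolytope (convexHull ℝ (Set.range fun i => coeVec (ρ' i))) =
      (fun v => ((H.map ((↑) : ℤ → ℝ)).transpose)⁻¹.mulVec v) ''
        dualPolytope (convexHull ℝ (Set.range fun i => coeVec (ρ i)))) :
    multOf ρ' ∣ multOf ρd :=
  mult_divides_dual_mult_general n lam ρ ρ' ρd ρ'd hreflP' hd hd' ha H hH hb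
end

section
/- A weighted projective space ℙ(λ₀,…,λₙ) is Gorenstein if and only if λⱼ divides h := Σᵢλᵢ for every j. Reformulated combinatorially: the lattice simplex P with primitive vertices ρ₀,…,ρₙ generating ℤⁿ and satisfying Σᵢλᵢρᵢ = 0 is reflexive if and only if λⱼ ∣ Σᵢλᵢ for all j ∈ {0,…,n}. -/
/-!
The vertices `ρᵢ` form an affine basis of `ℝⁿ` in which the origin has barycentric coordinates
`tᵢ = λᵢ / h`, where `h = Σᵢ λᵢ`; in particular `0` lies in the interior of `P`. The dual
`P^∨ = {u | ⟨u, ρᵢ⟩ ≥ -1 for all i}` is the simplex whose vertices `uⱼ` satisfy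
`⟨uⱼ, x⟩ = bⱼ(x) / tⱼ - 1`, with `bⱼ` the barycentric coordinates; hence `⟨uⱼ, ρᵢ⟩ = -1` for
`i ≠ j` and `⟨uⱼ, ρⱼ⟩ = h / λⱼ - 1`. As the `ρᵢ` generate `ℤⁿ`, a real vector is a lattice point
iff its pairings with all `ρᵢ` are integers, so `uⱼ` is a lattice point iff `λⱼ ∣ h`. Finally
`P^∨` is a lattice polytope iff its vertices `uⱼ` are lattice points.
-/

open Set Matrix

section DualSimplex

variable {ι m : Type*} [Fintype m] (b : AffineBasis ι ℝ (m → ℝ))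

/-- The barycentric coordinates of `u` with respect to the vertices `dualVertex b j`
(`sum_dualWeight_smul_dualVertex`). -/
noncomputable def dualWeight (u : m → ℝ) (j : ι) : ℝ :=
  b.coord j 0 * (u ⬝ᵥ b j + 1)

theorem sum_dualWeight [Fintype ι] (u : m → ℝ) : ∑ j, dualWeight b u j = 1 := by
  have h0 : ∑ j, b.coord j 0 • b j = 0 := b.linear_combination_coord_eq_self 0
  calc ∑ j, dualWeight b u j = u ⬝ᵥ (∑ j, b.coord j 0 • b j) + ∑ j, b.coord j 0 := by
        simp only [dualWeight, dotProduct_sum, dotProduct_smul, smul_eq_mul, mul_add, mul_one,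
          Finset.sum_add_distrib]
    _ = 1 := by rw [h0, dotProduct_zero, b.sum_coord_apply_eq_one, zero_add]

variable [DecidableEq m]

/-- The vertex of the dual simplex that is dual to the facet of `b` opposite `b j`. -/
noncomputable def dualVertex (j : ι) : m → ℝ :=
  (b.coord j 0)⁻¹ • (dotProductEquiv ℝ m).symm (b.coord j).linear

variable {b}

theorem dualVertex_dotProduct {j : ι} (hj : b.coord j 0 ≠ 0) (x : m → ℝ) :
    dualVertex b j ⬝ᵥ x = b.coord j x / b.coord j 0 - 1 := by
  have hlin : (b.coord j).linear x = b.coord j x - b.coord j 0 := by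
    simpa using (b.coord j).linearMap_vsub x 0
  have hdot : (dotProductEquiv ℝ m).symm (b.coord j).linear ⬝ᵥ x = (b.coord j).linear x :=
    congrArg (fun f => f x) ((dotProductEquiv ℝ m).apply_symm_apply (b.coord j).linear)
  rw [dualVertex, smul_dotProduct, hdot, hlin, smul_eq_mul]
  field_simp

theorem dualVertex_dotProduct_self {j : ι} (hj : b.coord j 0 ≠ 0) :
    dualVertex b j ⬝ᵥ b j = (b.coord j 0)⁻¹ - 1 := by
  rw [dualVertex_dotProduct hj, b.coord_apply_eq, one_div]

theorem dualVertex_dotProduct_of_ne {i j : ι} (hj : b.coord j 0 ≠ 0) (hij : i ≠ j) :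
    dualVertex b j ⬝ᵥ b i = -1 := by
  rw [dualVertex_dotProduct hj, b.coord_apply_ne hij.symm, zero_div, zero_sub]

variable [Fintype ι]

theorem sum_dualWeight_smul_dualVertex (hb : ∀ j, b.coord j 0 ≠ 0) (u : m → ℝ) :
    ∑ j, dualWeight b u j • dualVertex b j = u := by
  refine dotProduct_eq _ _ fun x => ?_
  have hx : ∑ j, b.coord j x • b j = x := b.linear_combination_coord_eq_self x
  calc (∑ j, dualWeight b u j • dualVertex b j) ⬝ᵥ x
      = ∑ j, (u ⬝ᵥ b j + 1) * b.coord j x - ∑ j, dualWeight b u j := by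
        simp only [sum_dotProduct, smul_dotProduct, smul_eq_mul, dualVertex_dotProduct (hb _),
          ← Finset.sum_sub_distrib, dualWeight]
        refine Finset.sum_congr rfl fun j _ => ?_
        field_simp [hb j]
    _ = u ⬝ᵥ (∑ j, b.coord j x • b j) + ∑ j, b.coord j x - 1 := by
        simp only [sum_dualWeight, dotProduct_sum, dotProduct_smul, smul_eq_mul, add_mul,
          one_mul, Finset.sum_add_distrib, mul_comm]
    _ = u ⬝ᵥ x := by rw [hx, b.sum_coord_apply_eq_one, add_sub_cancel_right]

theorem eq_dualVertex_of_dotProduct_eq_neg_one (hb : ∀ j, b.coord j 0 ≠ 0) {j : ι}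
    {u : m → ℝ} (hu : ∀ i ≠ j, u ⬝ᵥ b i = -1) : u = dualVertex b j := by
  have hzero : ∀ i ≠ j, dualWeight b u i = 0 := fun i hi => by
    rw [dualWeight, hu i hi, neg_add_cancel, mul_zero]
  have hone : dualWeight b u j = 1 := by
    rw [← sum_dualWeight b u, Finset.sum_eq_single j (fun i _ hi => hzero i hi) (by simp)]
  rw [← sum_dualWeight_smul_dualVertex hb u,
    Finset.sum_eq_single j (fun i _ hi => by rw [hzero i hi, zero_smul]) (by simp), hone,
    one_smul]

end DualSimplex

section DualPolytope

variable {ι : Type*} {n : ℕ}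

theorem convex_dualPolytope (Q : Set (Fin n → ℝ)) : Convex ℝ (dualPolytope Q) := by
  intro x hx y hy a c ha hc hac v hv
  change -1 ≤ (a • x + c • y) ⬝ᵥ v
  have hxv : -1 ≤ x ⬝ᵥ v := hx v hv
  have hyv : -1 ≤ y ⬝ᵥ v := hy v hv
  rw [add_dotProduct, smul_dotProduct, smul_dotProduct, smul_eq_mul, smul_eq_mul]
  nlinarith

theorem mem_dualPolytope_convexHull_range {v : ι → Fin n → ℝ} {u : Fin n → ℝ} :
    u ∈ dualPolytope (convexHull ℝ (range v)) ↔ ∀ i, -1 ≤ u ⬝ᵥ v i := by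
  refine ⟨fun hu i => hu (v i) (subset_convexHull ℝ _ ⟨i, rfl⟩), fun hu => ?_⟩
  have hhalf : Convex ℝ {x : Fin n → ℝ | -1 ≤ u ⬝ᵥ x} :=
    convex_halfSpace_ge (dotProductEquiv ℝ (Fin n) u).isLinear (-1)
  have hsub : range v ⊆ {x | -1 ≤ u ⬝ᵥ x} := range_subset_iff.2 hu
  exact fun x hx => convexHull_min hsub hhalf hx

variable {b : AffineBasis ι ℝ (Fin n → ℝ)}

theorem dualVertex_mem_dualPolytope (hb : ∀ j, 0 < b.coord j 0) (j : ι) :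
    dualVertex b j ∈ dualPolytope (convexHull ℝ (range b)) := by
  refine mem_dualPolytope_convexHull_range.2 fun i => ?_
  rcases eq_or_ne i j with rfl | hij
  · rw [dualVertex_dotProduct_self (hb i).ne']
    linarith [inv_pos.2 (hb i)]
  · rw [dualVertex_dotProduct_of_ne (hb j).ne' hij]

variable [Fintype ι]

theorem dualPolytope_convexHull_eq (hb : ∀ j, 0 < b.coord j 0) :
    dualPolytope (convexHull ℝ (range b)) = convexHull ℝ (range (dualVertex b)) := by
  refine Subset.antisymm (fun u hu => ?_) <|
    convexHull_min (range_subset_iff.2 (dualVertex_mem_dualPolytope hb)) (convex_dualPolytope _)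
  have hweight : ∀ j ∈ Finset.univ, 0 ≤ dualWeight b u j := fun j _ =>
    mul_nonneg (hb j).le (by linarith [mem_dualPolytope_convexHull_range.1 hu j])
  rw [← sum_dualWeight_smul_dualVertex (fun j => (hb j).ne') u]
  exact (convex_convexHull ℝ _).sum_mem hweight (sum_dualWeight b u)
    fun j _ => subset_convexHull ℝ _ ⟨j, rfl⟩

theorem dualVertex_mem_extremePoints (hb : ∀ j, 0 < b.coord j 0) (j : ι) :
    dualVertex b j ∈ (dualPolytope (convexHull ℝ (range b))).extremePoints ℝ := by
  refine ⟨dualVertex_mem_dualPolytope hb j, fun x hx y hy ⟨a, c, ha, hc, hac, hxy⟩ => ?_⟩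
  refine eq_dualVertex_of_dotProduct_eq_neg_one (fun j => (hb j).ne') fun i hij => ?_
  have hxi := mem_dualPolytope_convexHull_range.1 hx i
  have hyi := mem_dualPolytope_convexHull_range.1 hy i
  have hsum : a * (x ⬝ᵥ b i) + c * (y ⬝ᵥ b i) = -1 := by
    rw [← dualVertex_dotProduct_of_ne (hb j).ne' hij, ← hxy, add_dotProduct, smul_dotProduct,
      smul_dotProduct, smul_eq_mul, smul_eq_mul]
  nlinarith

end DualPolytope

section AffineBasisOfRelation

variable {ι k V : Type*} [Field k] [AddCommGroup V] [Module k V] {v : ι → V}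

theorem vectorSpan_eq_top_of_zero_mem_affineSpan (hspan : Submodule.span k (range v) = ⊤)
    (h0 : (0 : V) ∈ affineSpan k (range v)) : vectorSpan k (range v) = ⊤ := by
  rw [eq_top_iff, ← hspan, Submodule.span_le]
  rintro _ ⟨i, rfl⟩
  simpa [direction_affineSpan] using
    AffineSubspace.vsub_mem_direction (mem_affineSpan k (mem_range_self i)) h0

variable [Fintype ι] {w : ι → k}

theorem sum_div_sum_eq_one (hw : ∑ i, w i ≠ 0) : ∑ i, w i / ∑ j, w j = 1 := by
  rw [← Finset.sum_div, div_self hw]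

theorem affineCombination_div_sum_eq_zero (hw : ∑ i, w i ≠ 0) (hv : ∑ i, w i • v i = 0) :
    Finset.univ.affineCombination k v (fun i => w i / ∑ j, w j) = 0 := by
  rw [Finset.affineCombination_eq_linear_combination _ _ _ (sum_div_sum_eq_one hw)]
  simp only [div_eq_inv_mul, mul_smul, ← Finset.smul_sum, hv, smul_zero]

theorem zero_mem_affineSpan_of_sum_smul_eq_zero (hw : ∑ i, w i ≠ 0) (hv : ∑ i, w i • v i = 0) :
    (0 : V) ∈ affineSpan k (range v) := by
  rw [← affineCombination_div_sum_eq_zero hw hv]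
  exact affineCombination_mem_affineSpan (sum_div_sum_eq_one hw) v

theorem AffineBasis.coord_zero_eq_div (b : AffineBasis ι k V) (hw : ∑ i, w i ≠ 0)
    (hb : ∑ i, w i • b i = 0) (j : ι) : b.coord j 0 = w j / ∑ i, w i := by
  rw [← affineCombination_div_sum_eq_zero hw hb,
    b.coord_apply_combination_of_mem (Finset.mem_univ j) (sum_div_sum_eq_one hw)]

variable [FiniteDimensional k V]

noncomputable def AffineBasis.ofZeroMemAffineSpan (v : ι → V)
    (hcard : Fintype.card ι = Module.finrank k V + 1) (hspan : Submodule.span k (range v) = ⊤)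
    (h0 : (0 : V) ∈ affineSpan k (range v)) : AffineBasis ι k V :=
  have hvec := vectorSpan_eq_top_of_zero_mem_affineSpan hspan h0
  have : Nonempty ι := Fintype.card_pos_iff.1 (hcard ▸ Nat.succ_pos _)
  ⟨v, (affineIndependent_iff_le_finrank_vectorSpan k v hcard).2 (by rw [hvec, finrank_top]),
    (AffineSubspace.affineSpan_eq_top_iff_vectorSpan_eq_top_of_nonempty k V V
      (range_nonempty v)).2 hvec⟩

end AffineBasisOfRelation

section Lattice

variable {ι : Type*} {n : ℕ}

noncomputable def coeVecLinearMap (n : ℕ) : (Fin n → ℤ) →ₗ[ℤ] Fin n → ℝ :=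
  (Int.castAddHom ℝ).toIntLinearMap.compLeft (Fin n)

theorem coeVecLinearMap_apply (v : Fin n → ℤ) : coeVecLinearMap n v = coeVec v := rfl

theorem coeVec_single (k : Fin n) :
    coeVec (Pi.single k 1) = (Pi.single k 1 : Fin n → ℝ) := by
  ext j
  rcases eq_or_ne j k with rfl | hjk <;> simp [coeVec, *]

theorem coeVec_dotProduct_coeVec (w v : Fin n → ℤ) :
    coeVec w ⬝ᵥ coeVec v = ((w ⬝ᵥ v : ℤ) : ℝ) :=
  ((Int.castRingHom ℝ).map_dotProduct w v).symm

theorem sum_smul_coeVec_eq_zero {ρ : ι → Fin n → ℤ} {lam : ι → ℤ} [Fintype ι]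
    (hrel : ∑ i, lam i • ρ i = 0) : ∑ i, (lam i : ℝ) • coeVec (ρ i) = 0 := by
  have h := congrArg (coeVecLinearMap n) hrel
  simp only [map_sum, map_zsmul, map_zero, coeVecLinearMap_apply] at h
  simpa only [Int.cast_smul_eq_zsmul] using h

theorem span_range_coeVec_eq_top {ρ : ι → Fin n → ℤ}
    (hgen : Submodule.span ℤ (range ρ) = ⊤) :
    Submodule.span ℝ (range fun i => coeVec (ρ i)) = ⊤ := by
  let L := ((Submodule.span ℝ (range fun i => coeVec (ρ i))).restrictScalars ℤ).comap
    (coeVecLinearMap n)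
  have hL : Submodule.span ℤ (range ρ) ≤ L :=
    Submodule.span_le.2 <| range_subset_iff.2 fun i => Submodule.subset_span ⟨i, rfl⟩
  rw [eq_top_iff, ← (Pi.basisFun ℝ (Fin n)).span_eq, Submodule.span_le]
  rintro _ ⟨k, rfl⟩
  have hk : coeVec (Pi.single k 1) ∈ Submodule.span ℝ (range fun i => coeVec (ρ i)) :=
    hL (hgen ▸ Submodule.mem_top)
  rwa [coeVec_single, ← Pi.basisFun_apply] at hk

theorem exists_coeVec_eq_iff {ρ : ι → Fin n → ℤ} (hgen : Submodule.span ℤ (range ρ) = ⊤)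
    {u : Fin n → ℝ} : (∃ w, coeVec w = u) ↔ ∀ i, ∃ z : ℤ, u ⬝ᵥ coeVec (ρ i) = z := by
  refine ⟨fun ⟨w, hw⟩ i => ⟨w ⬝ᵥ ρ i, hw ▸ coeVec_dotProduct_coeVec w (ρ i)⟩, fun hu => ?_⟩
  let φ : (Fin n → ℤ) →+ ℝ :=
    (dotProductEquiv ℝ (Fin n) u).toAddMonoidHom.comp (coeVecLinearMap n).toAddMonoidHom
  let L := (AddSubgroup.comap φ (Int.castAddHom ℝ).range).toIntSubmodule
  have hL : Submodule.span ℤ (range ρ) ≤ L := Submodule.span_le.2 <| range_subset_iff.2 fun i =>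
    let ⟨z, hz⟩ := hu i; ⟨z, hz.symm⟩
  have hcoord : ∀ k, ∃ z : ℤ, (z : ℝ) = u k := fun k => by
    obtain ⟨z, hz⟩ := hL (hgen ▸ Submodule.mem_top : Pi.single k 1 ∈ Submodule.span ℤ (range ρ))
    refine ⟨z, hz.trans ?_⟩
    change u ⬝ᵥ coeVec (Pi.single k 1) = u k
    rw [coeVec_single, dotProduct_single, mul_one]
  choose w hw using hcoord
  exact ⟨w, funext hw⟩

end Lattice

section Gorenstein

variable {ι : Type*} {n : ℕ}

theorem exists_intCast_eq_div_iff_dvd {a c : ℤ} (hc : c ≠ 0) :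
    (∃ z : ℤ, (a : ℝ) / c = z) ↔ c ∣ a := by
  have hc' : (c : ℝ) ≠ 0 := Int.cast_ne_zero.2 hc
  constructor
  · rintro ⟨z, hz⟩
    rw [div_eq_iff hc'] at hz
    exact ⟨z, by exact_mod_cast hz.trans (mul_comm _ _)⟩
  · rintro ⟨z, rfl⟩
    exact ⟨z, by push_cast; field_simp⟩

theorem exists_coeVec_eq_dualVertex_iff {ρ : ι → Fin n → ℤ}
    (hgen : Submodule.span ℤ (range ρ) = ⊤) {b : AffineBasis ι ℝ (Fin n → ℝ)}
    (hbρ : ∀ i, b i = coeVec (ρ i)) {j : ι} (hj : b.coord j 0 ≠ 0) :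
    (∃ w, coeVec w = dualVertex b j) ↔ ∃ z : ℤ, (b.coord j 0)⁻¹ = z := by
  simp only [exists_coeVec_eq_iff hgen, ← hbρ]
  refine ⟨fun h => ?_, fun ⟨z, hz⟩ i => ?_⟩
  · obtain ⟨z, hz⟩ := h j
    rw [dualVertex_dotProduct_self hj] at hz
    exact ⟨z + 1, by push_cast; linarith⟩
  · rcases eq_or_ne i j with rfl | hij
    · exact ⟨z - 1, by rw [dualVertex_dotProduct_self hj, hz]; push_cast; ring⟩
    · exact ⟨-1, by rw [dualVertex_dotProduct_of_ne hj hij]; push_cast; ring⟩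

theorem exists_affineBasis_coe_eq {ρ : Fin (n + 1) → Fin n → ℤ} {lam : Fin (n + 1) → ℤ}
    (hgen : Submodule.span ℤ (range ρ) = ⊤) (hlam : ∑ i, (lam i : ℝ) ≠ 0)
    (hrel : ∑ i, lam i • ρ i = 0) :
    ∃ b : AffineBasis (Fin (n + 1)) ℝ (Fin n → ℝ),
      ⇑b = (fun i => coeVec (ρ i)) ∧ ∀ j, b.coord j 0 = lam j / ∑ i, (lam i : ℝ) := by
  have hrelℝ := sum_smul_coeVec_eq_zero hrel
  let b := AffineBasis.ofZeroMemAffineSpan (fun i => coeVec (ρ i)) (by simp)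
    (span_range_coeVec_eq_top hgen) (zero_mem_affineSpan_of_sum_smul_eq_zero hlam hrelℝ)
  exact ⟨b, rfl, b.coord_zero_eq_div hlam hrelℝ⟩

end Gorenstein

theorem wps_gorenstein_iff_weights_divide_general (n : ℕ) (ρ : Fin (n + 1) → Fin n → ℤ)
    (hgen : Submodule.span ℤ (Set.range ρ) = ⊤)
    (lam : Fin (n + 1) → ℤ) (hpos : ∀ i, 0 < lam i)
    (hrel : ∑ i, lam i • ρ i = 0) :
    IsReflexive (convexHull ℝ (Set.range fun i => coeVec (ρ i))) ↔
      ∀ j, lam j ∣ ∑ i, lam i := by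
  have hsum : (0 : ℝ) < ∑ i, (lam i : ℝ) :=
    Finset.sum_pos (fun i _ => Int.cast_pos.2 (hpos i)) Finset.univ_nonempty
  obtain ⟨b, hbρ, hcoord⟩ := exists_affineBasis_coe_eq hgen hsum.ne' hrel
  have hb : ∀ j, 0 < b.coord j 0 := fun j => hcoord j ▸ div_pos (Int.cast_pos.2 (hpos j)) hsum
  have hdual : ∀ j, (∃ w, coeVec w = dualVertex b j) ↔ lam j ∣ ∑ i, lam i := fun j => by
    rw [exists_coeVec_eq_dualVertex_iff hgen (congrFun hbρ) (hb j).ne', hcoord, inv_div,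
      ← exists_intCast_eq_div_iff_dvd (hpos j).ne', Int.cast_sum]
  rw [← hbρ]
  constructor
  · rintro ⟨-, -, S, hS⟩ j
    have hext := dualVertex_mem_extremePoints hb j
    rw [hS] at hext
    obtain ⟨w, -, hw⟩ := extremePoints_convexHull_subset hext
    exact (hdual j).1 ⟨w, hw⟩
  · intro hdvd
    choose W hW using fun j => (hdual j).2 (hdvd j)
    refine ⟨⟨Finset.univ.image ρ, ?_⟩, b.interior_convexHull ▸ hb, ⟨Finset.univ.image W, ?_⟩⟩
    · rw [Finset.coe_image, Finset.coe_univ, image_univ, ← range_comp, hbρ]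
      rfl
    · rw [dualPolytope_convexHull_eq hb, Finset.coe_image, Finset.coe_univ, image_univ,
        ← range_comp, show coeVec ∘ W = dualVertex b from funext hW]

/-- **Gorenstein weighted projective spaces and unit partitions.**
The weighted projective space ℙ(λ₀,…,λₙ) is Gorenstein iff each λⱼ divides h = Σᵢλᵢ:
the simplex P with primitive vertices ρ₀,…,ρₙ generating ℤⁿ and satisfying Σᵢλᵢρᵢ = 0
is reflexive if and only if λⱼ ∣ Σᵢλᵢ for all j. -/
theorem wps_gorenstein_iff_weights_divide (n : ℕ) (ρ : Fin (n + 1) → Fin n → ℤ)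
    (hprim : ∀ i, Finset.univ.gcd (ρ i) = 1)
    (hgen : Submodule.span ℤ (Set.range ρ) = ⊤)
    (lam : Fin (n + 1) → ℤ) (hpos : ∀ i, 0 < lam i)
    (hgcd : Finset.univ.gcd lam = 1)
    (hrel : ∑ i, lam i • ρ i = 0) :
    IsReflexive (convexHull ℝ (Set.range fun i => coeVec (ρ i))) ↔
      ∀ j, lam j ∣ ∑ i, lam i :=
  wps_gorenstein_iff_weights_divide_general n ρ hgen lam hpos hrel
end
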